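/- For the bivariate Gumbel copula with δ>1 and fixed α ∈ (0,1), with standard normal margins, F_{Y|X}^{-1}(α|x) ~ -(-2δ log α)^{1/(2δ)} |x|^{1-1/δ} as x → -∞; i.e., the lower-tail conditional quantile is sublinear with exponent η = 1 - 1/δ ∈ (0,1). -/

import Mathlib

/-!
Write `a = -log Φ(x)` and `b = -log q(Φ(x)) = -log Φ(Qy(x))`. In logarithmic form the quantile
equation `C_{V|U}(q(u) | u) = α` reads `(R - a) + (δ - 1) log (R / a) = -log α` with
`R = (a^δ + b^δ)^{1/δ}`. As `a → ∞` this forces `R / a → 1` and `R - a → -log α`, hence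
`b^δ = R^δ - a^δ ~ δ a^{δ-1} (R - a) ~ δ (-log α) a^{δ-1}`.
The crude Gaussian tail bounds `e^{-(1-x)²/2} ≤ ∫_{-∞}^x e^{-t²/2} ≤ e^{-x²/2}` (`x ≤ -1`) give
`-log Φ(x) ~ x²/2`; applied at `x` and at `Qy(x)` they turn `b ~ (-δ log α)^{1/δ} a^{1-1/δ}` into
`Qy(x)²/2 ~ (-δ log α)^{1/δ} (x²/2)^{1-1/δ}`, and `Qy(x) < 0` picks the sign of the square root.
-/

open Real Set Filter Topology

/-- The standard normal CDF `Φ`. -/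
noncomputable def stdNormalCDF (x : ℝ) : ℝ :=
  (∫ t in Set.Iic x, Real.exp (-t ^ 2 / 2)) / Real.sqrt (2 * Real.pi)

open MeasureTheory Asymptotics

lemma tendsto_sq_div_two_atBot : Tendsto (fun x : ℝ => x ^ 2 / 2) atBot atTop :=
  (((tendsto_pow_atTop two_ne_zero).comp tendsto_neg_atBot_atTop).congr fun x => by
    simp).atTop_div_const two_pos

lemma integrable_exp_neg_sq_div_two : Integrable fun t : ℝ => exp (-t ^ 2 / 2) := by
  simpa [neg_div, div_eq_inv_mul] using integrable_exp_neg_mul_sq (b := 2⁻¹) (by norm_num)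

lemma integral_Iic_exp_neg_sq_div_two_le {x : ℝ} (hx : x ≤ -1) :
    ∫ t in Iic x, exp (-t ^ 2 / 2) ≤ exp (-x ^ 2 / 2) := by
  have hderiv (t : ℝ) : HasDerivAt (fun s => exp (-s ^ 2 / 2)) (-t * exp (-t ^ 2 / 2)) t := by
    have h : HasDerivAt (fun s : ℝ => -s ^ 2 / 2) (-t) t :=
      ((hasDerivAt_pow 2 t).neg.div_const 2).congr_deriv (by push_cast; ring)
    exact h.exp.congr_deriv (mul_comm _ _)
  have hint : Integrable fun t : ℝ => -t * exp (-t ^ 2 / 2) := by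
    simpa [neg_div, div_eq_inv_mul] using
      (integrable_mul_exp_neg_mul_sq (b := 2⁻¹) (by norm_num)).neg
  have hlim : Tendsto (fun s : ℝ => exp (-s ^ 2 / 2)) atBot (𝓝 0) :=
    tendsto_exp_atBot.comp <| (tendsto_neg_atTop_atBot.comp tendsto_sq_div_two_atBot).congr
      fun s => by simp [neg_div]
  calc ∫ t in Iic x, exp (-t ^ 2 / 2) ≤ ∫ t in Iic x, -t * exp (-t ^ 2 / 2) :=
        setIntegral_mono_on integrable_exp_neg_sq_div_two.integrableOn hint.integrableOn
          measurableSet_Iic fun t ht => le_mul_of_one_le_left (exp_pos _).le (by linarith [ht.out])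
    _ = exp (-x ^ 2 / 2) := by
        rw [integral_Iic_of_hasDerivAt_of_tendsto' (fun t _ => hderiv t) hint.integrableOn hlim,
          sub_zero]

lemma exp_le_integral_Iic_exp_neg_sq_div_two (x : ℝ) :
    exp (-(|x| + 1) ^ 2 / 2) ≤ ∫ t in Iic x, exp (-t ^ 2 / 2) := by
  have hbound : ∀ t ∈ Icc (x - 1) x, exp (-(|x| + 1) ^ 2 / 2) ≤ exp (-t ^ 2 / 2) := by
    intro t ht
    have ht' : |t| ≤ |x| + 1 :=
      abs_le.2 ⟨by linarith [neg_abs_le x, ht.1], by linarith [le_abs_self x, ht.2]⟩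
    have := sq_abs t ▸ pow_le_pow_left₀ (abs_nonneg t) ht' 2
    exact exp_le_exp.2 (by linarith)
  calc exp (-(|x| + 1) ^ 2 / 2) = exp (-(|x| + 1) ^ 2 / 2) * volume.real (Icc (x - 1) x) := by
        simp
    _ ≤ ∫ t in Icc (x - 1) x, exp (-t ^ 2 / 2) :=
        setIntegral_ge_of_const_le_real measurableSet_Icc (by simp) hbound
          integrable_exp_neg_sq_div_two.integrableOn
    _ ≤ ∫ t in Iic x, exp (-t ^ 2 / 2) :=
        setIntegral_mono_set integrable_exp_neg_sq_div_two.integrableOn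
          (ae_of_all _ fun t => (exp_pos _).le) Icc_subset_Iic_self.eventuallyLE

lemma stdNormalCDF_pos (x : ℝ) : 0 < stdNormalCDF x :=
  div_pos ((exp_pos _).trans_le (exp_le_integral_Iic_exp_neg_sq_div_two x)) (by positivity)

lemma stdNormalCDF_monotone : Monotone stdNormalCDF := fun _ _ hxy =>
  div_le_div_of_nonneg_right (setIntegral_mono_set integrable_exp_neg_sq_div_two.integrableOn
    (ae_of_all _ fun _ => (exp_pos _).le) (Iic_subset_Iic.2 hxy).eventuallyLE) (by positivity)

lemma stdNormalCDF_lt_one {x : ℝ} (hx : x ≤ -1) : stdNormalCDF x < 1 := by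
  rw [stdNormalCDF, div_lt_one (by positivity)]
  calc _ ≤ exp (-x ^ 2 / 2) := integral_Iic_exp_neg_sq_div_two_le hx
    _ ≤ 1 := exp_le_one_iff.2 (by nlinarith)
    _ < √(2 * π) := by rw [lt_sqrt zero_le_one]; nlinarith [pi_gt_three]

lemma neg_log_stdNormalCDF_mem_Icc {x : ℝ} (hx : x ≤ -1) :
    -log (stdNormalCDF x) ∈ Icc (x ^ 2 / 2 + log √(2 * π)) ((1 - x) ^ 2 / 2 + log √(2 * π)) := by
  have hN := (exp_pos _).trans_le (exp_le_integral_Iic_exp_neg_sq_div_two x)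
  rw [stdNormalCDF, log_div hN.ne' (by positivity)]
  have hupper := log_le_log hN (integral_Iic_exp_neg_sq_div_two_le hx)
  have hlower := log_le_log (exp_pos _) (exp_le_integral_Iic_exp_neg_sq_div_two x)
  rw [log_exp] at hupper hlower
  rw [abs_of_neg (by linarith), neg_add_eq_sub] at hlower
  constructor <;> linarith

lemma isEquivalent_neg_log_stdNormalCDF :
    (fun x => -log (stdNormalCDF x)) ~[atBot] fun x => x ^ 2 / 2 := by
  set C := log √(2 * π)
  have hlim (f : ℝ → ℝ) (hf : Continuous f) (h0 : f 0 = 1) :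
      Tendsto (fun x : ℝ => f x⁻¹) atBot (𝓝 1) :=
    h0 ▸ (hf.tendsto 0).comp tendsto_inv_atBot_zero
  -- the bounds of `neg_log_stdNormalCDF_mem_Icc` divided by `x ^ 2 / 2`, as functions of `x⁻¹`
  refine isEquivalent_of_tendsto_one <| tendsto_of_tendsto_of_tendsto_of_le_of_le'
    (hlim (fun y => 1 + 2 * C * y ^ 2) (by fun_prop) (by simp))
    (hlim (fun y => (y - 1) ^ 2 + 2 * C * y ^ 2) (by fun_prop) (by simp)) ?_ ?_
  · filter_upwards [eventually_le_atBot (-1)] with x hx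
    have hx0 : x ≠ 0 := by linarith
    rw [Pi.div_apply, le_div_iff₀ (by positivity)]
    field_simp
    linarith [(neg_log_stdNormalCDF_mem_Icc hx).1]
  · filter_upwards [eventually_le_atBot (-1)] with x hx
    have hx0 : x ≠ 0 := by linarith
    rw [Pi.div_apply, div_le_iff₀ (by positivity)]
    field_simp
    linarith [(neg_log_stdNormalCDF_mem_Icc hx).2]

lemma tendsto_atBot_of_tendsto_neg_log_stdNormalCDF {ι : Type*} {l : Filter ι} {g : ι → ℝ}
    (h : Tendsto (fun i => -log (stdNormalCDF (g i))) l atTop) : Tendsto g l atBot := by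
  refine tendsto_atBot.2 fun M => ?_
  filter_upwards [h.eventually_gt_atTop (-log (stdNormalCDF M))] with i hi
  refine (stdNormalCDF_monotone.reflect_lt ?_).le
  exact (log_lt_log_iff (stdNormalCDF_pos _) (stdNormalCDF_pos _)).1 (by linarith)

lemma tendsto_rpow_sub_one_div_sub_one (p : ℝ) :
    Tendsto (fun w : ℝ => (w ^ p - 1) / (w - 1)) (𝓝[≠] 1) (𝓝 p) := by
  have h := (hasDerivAt_rpow_const (x := 1) (p := p) (Or.inl one_ne_zero)).tendsto_slope
  rw [one_rpow, mul_one] at h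
  refine h.congr fun w => ?_
  rw [slope_def_field, one_rpow]

section MulSubOneAddLog

variable {ι : Type*} {l : Filter ι} {c L : ℝ} {a w : ι → ℝ}

lemma tendsto_nhdsGT_one_of_mul_sub_one_add_log_eq (hc : 0 ≤ c) (ha : Tendsto a l atTop)
    (hw : ∀ᶠ i in l, 1 < w i) (heq : ∀ᶠ i in l, a i * (w i - 1) + c * log (w i) = L) :
    Tendsto w l (𝓝[>] 1) := by
  refine tendsto_nhdsWithin_iff.2 ⟨tendsto_of_tendsto_of_tendsto_of_le_of_le' tendsto_const_nhds
    (by simpa using ((tendsto_const_nhds (x := L)).div_atTop ha).const_add 1)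
    (hw.mono fun i hi => hi.le) ?_, hw⟩
  -- `log w ≥ 0` forces `a (w - 1) ≤ L`
  filter_upwards [ha.eventually_gt_atTop 0, hw, heq] with i hai hwi hE
  have : 0 ≤ c * log (w i) := mul_nonneg hc (log_nonneg hwi.le)
  rw [← sub_le_iff_le_add', le_div_iff₀ hai]
  linarith

lemma tendsto_mul_sub_one_of_mul_sub_one_add_log_eq (hc : 0 ≤ c) (ha : Tendsto a l atTop)
    (hw : ∀ᶠ i in l, 1 < w i) (heq : ∀ᶠ i in l, a i * (w i - 1) + c * log (w i) = L) :
    Tendsto (fun i => a i * (w i - 1)) l (𝓝 L) := by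
  have hw1 := tendsto_nhds_of_tendsto_nhdsWithin
    (tendsto_nhdsGT_one_of_mul_sub_one_add_log_eq hc ha hw heq)
  have := ((continuousAt_log one_ne_zero).tendsto.comp hw1).const_mul c |>.const_sub L
  rw [log_one, mul_zero, sub_zero] at this
  refine this.congr' ?_
  filter_upwards [heq] with i hi
  rw [Function.comp_apply]
  linarith

end MulSubOneAddLog

lemma isEquivalent_of_tendsto_rpow_div_rpow {ι : Type*} {l : Filter ι} {δ M : ℝ} {a b : ι → ℝ}
    (hδ : 0 < δ) (hM : 0 < M) (hab : ∀ᶠ i in l, 0 < a i ∧ 0 < b i)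
    (h : Tendsto (fun i => b i ^ δ / a i ^ (δ - 1)) l (𝓝 M)) :
    b ~[l] fun i => M ^ (1 / δ) * a i ^ (1 - 1 / δ) := by
  have hlim : Tendsto (fun i => b i / a i ^ (1 - 1 / δ)) l (𝓝 (M ^ (1 / δ))) := by
    refine ((continuousAt_rpow_const _ _ (Or.inr (by positivity))).tendsto.comp h).congr' ?_
    filter_upwards [hab] with i hi
    rw [Function.comp_apply, div_rpow (rpow_nonneg hi.2.le _) (rpow_nonneg hi.1.le _),
      ← rpow_mul hi.2.le, ← rpow_mul hi.1.le, mul_one_div_cancel hδ.ne', rpow_one,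
      sub_mul, one_mul, mul_one_div_cancel hδ.ne']
  have := hlim.div_const (M ^ (1 / δ))
  rw [div_self (rpow_pos_of_pos hM _).ne'] at this
  exact isEquivalent_of_tendsto_one (this.congr fun i => (div_mul_eq_div_div_swap _ _ _).symm)

/-- The Gumbel copula is `C(u, v) = exp (-gumbelRadius δ (-log u) (-log v))`. -/
noncomputable def gumbelRadius (δ a b : ℝ) : ℝ := (a ^ δ + b ^ δ) ^ (1 / δ)

/-- The conditional distribution `C_{V|U}(v | u) = ∂C(u, v)/∂u` of the Gumbel copula. -/
noncomputable def gumbelCond (δ u v : ℝ) : ℝ :=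
  u⁻¹ * exp (-gumbelRadius δ (-log u) (-log v)) * (1 + (-log v / -log u) ^ δ) ^ (1 / δ - 1)

section Gumbel

variable {δ a b : ℝ}

lemma gumbelRadius_rpow (hδ : δ ≠ 0) (ha : 0 ≤ a) (hb : 0 ≤ b) :
    gumbelRadius δ a b ^ δ = a ^ δ + b ^ δ := by
  rw [gumbelRadius, ← rpow_mul (by positivity), one_div_mul_cancel hδ, rpow_one]

lemma gumbelRadius_nonneg (ha : 0 ≤ a) (hb : 0 ≤ b) : 0 ≤ gumbelRadius δ a b := by
  unfold gumbelRadius; positivity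

lemma lt_gumbelRadius (hδ : 0 < δ) (ha : 0 ≤ a) (hb : 0 < b) : a < gumbelRadius δ a b := by
  rw [← rpow_lt_rpow_iff ha (gumbelRadius_nonneg ha hb.le) hδ, gumbelRadius_rpow hδ.ne' ha hb.le]
  exact lt_add_of_pos_right _ (rpow_pos_of_pos hb δ)

lemma one_add_div_rpow_eq_gumbelRadius_div (hδ : δ ≠ 0) (ha : 0 < a) (hb : 0 ≤ b) :
    1 + (b / a) ^ δ = (gumbelRadius δ a b / a) ^ δ := by
  rw [div_rpow (gumbelRadius_nonneg ha.le hb) ha.le, gumbelRadius_rpow hδ ha.le hb,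
    div_rpow hb ha.le, add_div, div_self (rpow_pos_of_pos ha δ).ne']

lemma neg_log_gumbelCond {u v : ℝ} (hδ : 0 < δ) (hu : u ∈ Ioo (0 : ℝ) 1)
    (hv : v ∈ Ioo (0 : ℝ) 1) :
    -log (gumbelCond δ u v) = gumbelRadius δ (-log u) (-log v) - -log u +
      (δ - 1) * log (gumbelRadius δ (-log u) (-log v) / -log u) := by
  have ha : 0 < -log u := neg_pos.2 (log_neg hu.1 hu.2)
  have hb : 0 < -log v := neg_pos.2 (log_neg hv.1 hv.2)
  have hw : 0 < gumbelRadius δ (-log u) (-log v) / -log u :=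
    div_pos (ha.trans (lt_gumbelRadius hδ ha.le hb)) ha
  have hu' : u⁻¹ ≠ 0 := inv_ne_zero hu.1.ne'
  rw [gumbelCond, one_add_div_rpow_eq_gumbelRadius_div hδ.ne' ha hb.le, ← rpow_mul hw.le,
    log_mul (mul_ne_zero hu' (exp_ne_zero _)) (rpow_pos_of_pos hw _).ne',
    log_mul hu' (exp_ne_zero _), log_inv, log_exp, log_rpow hw]
  field_simp
  ring

lemma isEquivalent_of_gumbelRadius_sub_add_log_eq {ι : Type*} {l : Filter ι} {L : ℝ}
    {a b : ι → ℝ} (hδ : 1 < δ) (hL : 0 < L) (ha : Tendsto a l atTop) (hb : ∀ᶠ i in l, 0 < b i)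
    (heq : ∀ᶠ i in l, gumbelRadius δ (a i) (b i) - a i +
      (δ - 1) * log (gumbelRadius δ (a i) (b i) / a i) = L) :
    b ~[l] fun i => (δ * L) ^ (1 / δ) * a i ^ (1 - 1 / δ) := by
  have hδ0 : 0 < δ := by linarith
  set w := fun i => gumbelRadius δ (a i) (b i) / a i
  have hpos : ∀ᶠ i in l, 0 < a i ∧ 0 < b i := (ha.eventually_gt_atTop 0).and hb
  have hw1 : ∀ᶠ i in l, 1 < w i := by
    filter_upwards [hpos] with i hi
    exact (one_lt_div hi.1).2 (lt_gumbelRadius hδ0 hi.1.le hi.2)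
  have heq' : ∀ᶠ i in l, a i * (w i - 1) + (δ - 1) * log (w i) = L := by
    filter_upwards [hpos, heq] with i hi hE
    rwa [mul_sub_one, mul_div_cancel₀ _ hi.1.ne']
  have hw := tendsto_nhdsGT_one_of_mul_sub_one_add_log_eq (by linarith) ha hw1 heq'
  -- `b ^ δ / a ^ (δ - 1) = a (w - 1) * ((w ^ δ - 1) / (w - 1)) → L * δ`
  refine isEquivalent_of_tendsto_rpow_div_rpow hδ0 (by positivity) hpos ?_
  rw [mul_comm δ L]
  refine ((tendsto_mul_sub_one_of_mul_sub_one_add_log_eq (by linarith) ha hw1 heq').mul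
    ((tendsto_rpow_sub_one_div_sub_one δ).comp (hw.mono_right (nhdsGT_le_nhdsNE 1)))).congr' ?_
  filter_upwards [hpos, hw1] with i hi hwi
  have hwδ : w i ^ δ - 1 = b i ^ δ / a i ^ δ := by
    rw [← one_add_div_rpow_eq_gumbelRadius_div hδ0.ne' hi.1 hi.2.le, div_rpow hi.2.le hi.1.le,
      add_sub_cancel_left]
  have : w i - 1 ≠ 0 := by linarith
  rw [Function.comp_apply, hwδ, rpow_sub_one hi.1.ne']
  field_simp

end Gumbel

lemma isEquivalent_neg_log_gumbel_quantile {ι : Type*} {l : Filter ι} {δ α : ℝ} {q : ℝ → ℝ}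
    {u : ι → ℝ} (hδ : 1 < δ) (hα : α ∈ Ioo (0 : ℝ) 1)
    (hq_mem : ∀ u ∈ Ioo (0 : ℝ) 1, q u ∈ Ioo (0 : ℝ) 1)
    (hq : ∀ u ∈ Ioo (0 : ℝ) 1, gumbelCond δ u (q u) = α)
    (hu : ∀ᶠ i in l, u i ∈ Ioo (0 : ℝ) 1) (hu0 : Tendsto (fun i => -log (u i)) l atTop) :
    (fun i => -log (q (u i))) ~[l] fun i => (δ * -log α) ^ (1 / δ) * (-log (u i)) ^ (1 - 1 / δ) :=
  isEquivalent_of_gumbelRadius_sub_add_log_eq hδ (neg_pos.2 (log_neg hα.1 hα.2)) hu0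
    (by filter_upwards [hu] with i hi using neg_pos.2 (log_neg (hq_mem _ hi).1 (hq_mem _ hi).2))
    (by filter_upwards [hu] with i hi
        rw [← neg_log_gumbelCond (by linarith) hi (hq_mem _ hi), hq _ hi])

lemma sq_rpow_mul_abs_rpow {δ L : ℝ} (x : ℝ) (hδ : 0 < δ) (hL : 0 ≤ L) :
    ((2 * δ * L) ^ (1 / (2 * δ)) * |x| ^ (1 - 1 / δ)) ^ 2 =
      2 * ((δ * L) ^ (1 / δ) * (x ^ 2 / 2) ^ (1 - 1 / δ)) := by
  have h2 : 2 / (2 : ℝ) ^ (1 - 1 / δ) = 2 ^ (1 / δ) := by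
    rw [div_eq_iff (by positivity), ← rpow_add two_pos]; norm_num
  have hc : ((2 * δ * L) ^ (1 / (2 * δ))) ^ 2 = 2 ^ (1 / δ) * (δ * L) ^ (1 / δ) := by
    rw [← rpow_mul_natCast (by positivity),
      show 1 / (2 * δ) * ((2 : ℕ) : ℝ) = 1 / δ by push_cast; field_simp,
      mul_assoc, mul_rpow zero_le_two (by positivity)]
  have hx : (|x| ^ (1 - 1 / δ)) ^ 2 = (x ^ 2) ^ (1 - 1 / δ) := by
    rw [← rpow_mul_natCast (abs_nonneg x), mul_comm, rpow_natCast_mul (abs_nonneg x), sq_abs]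
  rw [mul_pow, hc, hx, div_rpow (sq_nonneg x) zero_le_two, ← h2]
  ring

lemma tendsto_div_of_tendsto_sq_div_sq {ι : Type*} {l : Filter ι} {u v : ι → ℝ}
    (h : Tendsto (fun i => u i ^ 2 / v i ^ 2) l (𝓝 1)) (huv : ∀ᶠ i in l, 0 ≤ u i / v i) :
    Tendsto (fun i => u i / v i) l (𝓝 1) := by
  have := (continuous_sqrt.tendsto 1).comp h
  rw [sqrt_one] at this
  refine this.congr' ?_
  filter_upwards [huv] with i hi
  rw [Function.comp_apply, ← div_pow, sqrt_sq hi]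

/-- For the bivariate Gumbel copula with `δ>1` and fixed `α ∈ (0,1)`, with standard normal
margins, the conditional quantile `Qy x = F_{Y|X}^{-1}(α|x) = Φ⁻¹(C_{V|U}^{-1}(α|Φ x))`
satisfies `Qy x ~ -(-2δ log α)^{1/(2δ)} |x|^{1-1/δ}` as `x → -∞`: the lower-tail
conditional quantile is sublinear with exponent `η = 1 - 1/δ ∈ (0,1)`.  Here `q` is the
conditional quantile function of the Gumbel copula, i.e. the inverse in `v` of
`C_{V|U}(v|u) = u⁻¹ exp{-[(-log u)^δ+(-log v)^δ]^{1/δ}} [1+((-log v)/(-log u))^δ]^{1/δ-1}`,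
and `Qy` is characterized by `Φ(Qy x) = q(Φ x)`. -/
theorem gumbel_normal_margins_lower_quantile (δ α : ℝ) (hδ : 1 < δ) (hα : α ∈ Ioo (0:ℝ) 1)
    (q : ℝ → ℝ) (hq_mem : ∀ u ∈ Ioo (0:ℝ) 1, q u ∈ Ioo (0:ℝ) 1)
    (hq : ∀ u ∈ Ioo (0:ℝ) 1,
      u⁻¹ * Real.exp (-(((-Real.log u) ^ δ + (-Real.log (q u)) ^ δ) ^ (1 / δ))) *
        (1 + ((-Real.log (q u)) / (-Real.log u)) ^ δ) ^ (1 / δ - 1) = α)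
    (Qy : ℝ → ℝ) (hQy : ∀ x : ℝ, stdNormalCDF (Qy x) = q (stdNormalCDF x)) :
    Tendsto (fun x : ℝ =>
        Qy x / (-((-2 * δ * Real.log α) ^ (1 / (2 * δ)) * |x| ^ (1 - 1 / δ))))
      atBot (𝓝 1) := by
  have hδ0 : 0 < δ := by linarith
  have hL : 0 < -log α := neg_pos.2 (log_neg hα.1 hα.2)
  have hΦ : ∀ᶠ x in atBot, stdNormalCDF x ∈ Ioo (0 : ℝ) 1 := by
    filter_upwards [eventually_le_atBot (-1)] with x hx
    exact ⟨stdNormalCDF_pos x, stdNormalCDF_lt_one hx⟩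
  have hlogΦ := isEquivalent_neg_log_stdNormalCDF
  have hlogΦ_top := hlogΦ.symm.tendsto_atTop tendsto_sq_div_two_atBot
  have hlogq := isEquivalent_neg_log_gumbel_quantile hδ hα hq_mem hq hΦ hlogΦ_top
  simp only [← hQy] at hlogq
  have hQy_bot : Tendsto Qy atBot atBot := tendsto_atBot_of_tendsto_neg_log_stdNormalCDF <|
    hlogq.symm.tendsto_atTop <| ((tendsto_rpow_atTop (by simpa using inv_lt_one_of_one_lt₀ hδ)).comp
      hlogΦ_top).const_mul_atTop (by positivity)
  have hsq : (fun x => Qy x ^ 2 / 2) ~[atBot]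
      fun x => (δ * -log α) ^ (1 / δ) * (x ^ 2 / 2) ^ (1 - 1 / δ) :=
    (hlogΦ.comp_tendsto hQy_bot).symm.trans <|
      hlogq.trans (IsEquivalent.refl.mul (hlogΦ.rpow fun x => by positivity))
  have hx0 : ∀ᶠ x : ℝ in atBot, x ≠ 0 := eventually_ne_atBot 0
  rw [isEquivalent_iff_tendsto_one (hx0.mono fun x hx => by positivity)] at hsq
  refine tendsto_div_of_tendsto_sq_div_sq (hsq.congr' ?_) ?_
  · filter_upwards [hx0] with x hx
    rw [neg_sq, show -2 * δ * log α = 2 * δ * -log α by ring, sq_rpow_mul_abs_rpow x hδ0 hL.le,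
      Pi.div_apply, div_div]
  · filter_upwards [hQy_bot.eventually (eventually_le_atBot 0)] with x hx
    exact div_nonneg_of_nonpos hx
      (neg_nonpos.2 (mul_nonneg (rpow_nonneg (by nlinarith) _) (by positivity)))
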